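/- For every fixed live-edge subgraph G_X (each node having at most one live in-neighbor) and every fixed sign labeling Y : E_X → {−1, 0, +1}, the deterministic positive spread function f^+_{X,Y}(S) = |B^+(S)| is monotone and submodular as a function of the seed set S ⊆ V: f^+_{X,Y}(S) ≤ f^+_{X,Y}(T) whenever S ⊆ T ⊆ V, and f^+_{X,Y}(S ∪ {v}) − f^+_{X,Y}(S) ≥ f^+_{X,Y}(T ∪ {v}) − f^+_{X,Y}(T) for all S ⊆ T ⊆ V and v ∈ V \ T. -/
import Mathlib


/-- `anc parent v k` is the `k`-fold iterated live in-neighbor of `v` in a live-edge subgraph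
in which every node has at most one incoming live edge; the subgraph is encoded by
`parent : V → Option V`, where `parent v = some u` means that the live edge `(u, v)` is
present. -/
def anc {V : Type*} (parent : V → Option V) (v : V) : ℕ → Option V
  | 0 => some v
  | k + 1 => (anc parent v k).bind parent

/-- `v` is reachable from the seed set `S` in the live-edge subgraph, i.e. `v ∈ B(S)`. -/
def reaches {V : Type*} (parent : V → Option V) (S : Finset V) (v : V) : Prop :=
  ∃ k s, anc parent v k = some s ∧ s ∈ S

/-- The distance from `v` to its nearest seed ancestor along the chain of live in-neighbors. -/
noncomputable def seedDist {V : Type*} (parent : V → Option V) (S : Finset V) (v : V) : ℕ :=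
  sInf {k | ∃ s, anc parent v k = some s ∧ s ∈ S}

/-- The sign label of the `j`-th edge on the unique live path into `v`, counted backwards
from `v` (so `j = 0` is the live edge into `v` itself).  `Y u` denotes the label of the
unique live edge into `u` (and is irrelevant when `u` has no live in-edge). -/
def labelAt {V : Type*} (parent : V → Option V) (Y : V → SignType) (v : V) (j : ℕ) :
    SignType :=
  (anc parent v j).elim 0 Y

/-- `v ∈ B^+(S)`: `v` is reachable from `S`, and on the live path from its nearest seed
ancestor either every edge label is `0`, or the last edge with a nonzero label has label
`+1`. -/
def posNode {V : Type*} (parent : V → Option V) (Y : V → SignType) (S : Finset V)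
    (v : V) : Prop :=
  reaches parent S v ∧
    ((∀ j < seedDist parent S v, labelAt parent Y v j = 0) ∨
      ∃ j < seedDist parent S v, labelAt parent Y v j = SignType.pos ∧
        ∀ i < j, labelAt parent Y v i = 0)

/-- The set `B^+(S)` of positively activated nodes. -/
def Bpos {V : Type*} (parent : V → Option V) (Y : V → SignType) (S : Finset V) : Set V :=
  {v | posNode parent Y S v}


/-- The deterministic positive spread `f^+_{X,Y}(S) = |B^+(S)|` (as a real number). -/
noncomputable def fposLive {V : Type*} [Fintype V] (parent : V → Option V)
    (Y : V → SignType) (S : Finset V) : ℝ :=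
  ((Bpos parent Y S).ncard : ℝ)

lemma reaches_mono' {V : Type*} (parent : V → Option V) {S T : Finset V} (h : S ⊆ T)
    {v : V} (hr : reaches parent S v) : reaches parent T v := by
  obtain ⟨k, s, hk, hs⟩ := hr; exact ⟨k, s, hk, h hs⟩

lemma seedDist_anti' {V : Type*} (parent : V → Option V) {S T : Finset V} (h : S ⊆ T)
    {v : V} (hr : reaches parent S v) :
    seedDist parent T v ≤ seedDist parent S v := by
  obtain ⟨k, s, hk, hs⟩ := hr
  have hne : {k | ∃ s, anc parent v k = some s ∧ s ∈ S}.Nonempty := ⟨k, s, hk, hs⟩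
  obtain ⟨s', hk', hs'⟩ := Nat.sInf_mem hne
  exact Nat.sInf_le ⟨s', hk', h hs'⟩

lemma P_anti' {V : Type*} (parent : V → Option V) (Y : V → SignType) (v : V)
    {k k' : ℕ} (hkk : k' ≤ k)
    (h : (∀ j < k, labelAt parent Y v j = 0) ∨
      ∃ j < k, labelAt parent Y v j = SignType.pos ∧ ∀ i < j, labelAt parent Y v i = 0) :
    (∀ j < k', labelAt parent Y v j = 0) ∨
      ∃ j < k', labelAt parent Y v j = SignType.pos ∧ ∀ i < j, labelAt parent Y v i = 0 := by
  rcases h with h | ⟨j, hj, hp, hz⟩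
  · exact Or.inl fun j hj => h j (hj.trans_le hkk)
  · rcases lt_or_ge j k' with hjk | hjk
    · exact Or.inr ⟨j, hjk, hp, hz⟩
    · exact Or.inl fun i hi => hz i (hi.trans_le hjk)

lemma posNode_mono' {V : Type*} (parent : V → Option V) (Y : V → SignType)
    {S T : Finset V} (h : S ⊆ T) {v : V} (hp : posNode parent Y S v) :
    posNode parent Y T v := by
  obtain ⟨hr, hP⟩ := hp
  exact ⟨reaches_mono' parent h hr, P_anti' parent Y v (seedDist_anti' parent h hr) hP⟩

lemma key_marginal' {V : Type*} [DecidableEq V] (parent : V → Option V) (Y : V → SignType)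
    {S T : Finset V} (hST : S ⊆ T) (v : V) {w : V}
    (hw : posNode parent Y (insert v T) w) (hwT : ¬ posNode parent Y T w) :
    posNode parent Y (insert v S) w := by
  obtain ⟨⟨k, s, hk, hs⟩, hP⟩ := hw
  have hne : {k | ∃ s, anc parent w k = some s ∧ s ∈ insert v T}.Nonempty := ⟨k, s, hk, hs⟩
  obtain ⟨s0, hk0, hs0⟩ := Nat.sInf_mem hne
  rcases Finset.mem_insert.mp hs0 with rfl | hs0T
  · refine ⟨⟨_, s0, hk0, Finset.mem_insert_self _ _⟩, ?_⟩
    have h1 : seedDist parent (insert s0 S) w ≤ seedDist parent (insert s0 T) w :=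
      Nat.sInf_le ⟨s0, hk0, Finset.mem_insert_self _ _⟩
    exact P_anti' parent Y w h1 hP
  · exfalso
    apply hwT
    refine ⟨⟨_, s0, hk0, hs0T⟩, ?_⟩
    have h1 : seedDist parent T w ≤ seedDist parent (insert v T) w :=
      Nat.sInf_le ⟨s0, hk0, hs0T⟩
    exact P_anti' parent Y w h1 hP

lemma Bpos_mono' {V : Type*} (parent : V → Option V) (Y : V → SignType)
    {S T : Finset V} (h : S ⊆ T) : Bpos parent Y S ⊆ Bpos parent Y T :=
  fun _ hv => posNode_mono' parent Y h hv

/-- for every fixed live-edge subgraph (each node having at most one live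
in-neighbor) and every fixed sign labeling, the deterministic positive spread
`f^+_{X,Y}(S) = |B^+(S)|` is monotone and submodular in the seed set `S`. -/
theorem fposLive_monotone_submodular {V : Type*} [Fintype V] [DecidableEq V]
    (parent : V → Option V) (Y : V → SignType) :
    (∀ S T : Finset V, S ⊆ T → fposLive parent Y S ≤ fposLive parent Y T) ∧
    (∀ S T : Finset V, ∀ v : V, S ⊆ T → v ∉ T →
      fposLive parent Y (insert v T) - fposLive parent Y T ≤
        fposLive parent Y (insert v S) - fposLive parent Y S) := by
  have hcard : ∀ S T : Finset V, S ⊆ T →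
      (Bpos parent Y S).ncard ≤ (Bpos parent Y T).ncard := fun S T h =>
    Set.ncard_le_ncard (Bpos_mono' parent Y h) (Set.toFinite _)
  constructor
  · intro S T h
    simp only [fposLive]
    exact_mod_cast hcard S T h
  · intro S T v hST _
    have hdiff : ∀ U : Finset V,
        fposLive parent Y (insert v U) - fposLive parent Y U =
          ((Bpos parent Y (insert v U) \ Bpos parent Y U).ncard : ℝ) := by
      intro U
      have hsub : Bpos parent Y U ⊆ Bpos parent Y (insert v U) :=
        Bpos_mono' parent Y (Finset.subset_insert _ _)
      rw [fposLive, fposLive, Set.ncard_diff hsub (Set.toFinite _),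
        Nat.cast_sub (Set.ncard_le_ncard hsub (Set.toFinite _))]
    rw [hdiff S, hdiff T]
    have hincl : Bpos parent Y (insert v T) \ Bpos parent Y T ⊆
        Bpos parent Y (insert v S) \ Bpos parent Y S := by
      intro w hw
      refine ⟨key_marginal' parent Y hST v hw.1 hw.2, fun hwS => hw.2 ?_⟩
      exact posNode_mono' parent Y hST hwS
    exact_mod_cast Set.ncard_le_ncard hincl (Set.toFinite _)
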